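/- arXiv:2503.02832 — 2 statements merged into one kernel-verified Lean document; each statement's English description precedes it below -/
import Mathlib

section
/- If π, π_dpo, π_ref are positive probability distributions on a finite type V and β, β₀ > 0, then the expected token-level objective ∑_i π(i) [β₀ log(π_dpo(i)/π_ref(i)) − β log(π(i)/π_ref(i))] equals −β · KL(π ‖ π*) + β · log Z, where π* = softmax((β₀/β)·log π_dpo + (1 − β₀/β)·log π_ref) and Z = ∑_j exp((β₀/β)·log π_dpo(j) + (1 − β₀/β)·log π_ref(j)). -/
theorem rlhf_obj_eq_neg_kl_add_logZ (V : Type*) [Fintype V] [Nonempty V]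
    (π πdpo πref : V → ℝ)
    (hπ : ∀ i, 0 < π i) (hdpo : ∀ i, 0 < πdpo i) (href : ∀ i, 0 < πref i)
    (hπs : ∑ i, π i = 1) (hdpos : ∑ i, πdpo i = 1) (hrefs : ∑ i, πref i = 1)
    (β β₀ : ℝ) (hβ : 0 < β) (hβ₀ : 0 < β₀)
    (πstar : V → ℝ)
    (hstar : ∀ i, πstar i =
      Real.exp ((β₀ / β) * Real.log (πdpo i) + (1 - β₀ / β) * Real.log (πref i)) /
        ∑ j, Real.exp ((β₀ / β) * Real.log (πdpo j) + (1 - β₀ / β) * Real.log (πref j))) :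
    ∑ i, π i * (β₀ * Real.log (πdpo i / πref i) - β * Real.log (π i / πref i)) =
      -β * (∑ i, π i * Real.log (π i / πstar i)) +
        β * Real.log (∑ j, Real.exp ((β₀ / β) * Real.log (πdpo j) +
          (1 - β₀ / β) * Real.log (πref j))) := by
  set Z : ℝ := ∑ j, Real.exp ((β₀ / β) * Real.log (πdpo j) +
      (1 - β₀ / β) * Real.log (πref j)) with hZdef
  have hZ : 0 < Z := Finset.sum_pos (fun j _ => Real.exp_pos _) Finset.univ_nonempty
  have key : ∀ i, π i * (β₀ * Real.log (πdpo i / πref i) - β * Real.log (π i / πref i))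
      = -β * (π i * Real.log (π i / πstar i)) + β * Real.log Z * π i := by
    intro i
    rw [hstar i]
    rw [Real.log_div (hπ i).ne' (div_ne_zero (Real.exp_ne_zero _) hZ.ne'),
        Real.log_div (Real.exp_ne_zero _) hZ.ne', Real.log_exp,
        Real.log_div (hdpo i).ne' (href i).ne',
        Real.log_div (hπ i).ne' (href i).ne']
    field_simp
    ring
  rw [Finset.sum_congr rfl (fun i _ => key i), Finset.sum_add_distrib,
      ← Finset.mul_sum, ← Finset.mul_sum, hπs]
  ring
end

section
/- The maximizer over positive probability distributions π on a finite type V of the objective J(π) = ∑_i π(i)[β₀ log(π_dpo(i)/π_ref(i)) − β log(π(i)/π_ref(i))] is the distribution π*(i) proportional to exp((β₀/β) log π_dpo(i) + (1 − β₀/β) log π_ref(i)): i.e., for every positive probability distribution π, J(π) ≤ J(π*), with equality iff π = π*. -/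
theorem rlhf_maximizer (V : Type*) [Fintype V] [Nonempty V]
    (πdpo πref : V → ℝ)
    (hdpo : ∀ i, 0 < πdpo i) (href : ∀ i, 0 < πref i)
    (hdpos : ∑ i, πdpo i = 1) (hrefs : ∑ i, πref i = 1)
    (β β₀ : ℝ) (hβ : 0 < β) (hβ₀ : 0 < β₀)
    (πstar : V → ℝ)
    (hstar : ∀ i, πstar i =
      Real.exp ((β₀ / β) * Real.log (πdpo i) + (1 - β₀ / β) * Real.log (πref i)) /
        ∑ j, Real.exp ((β₀ / β) * Real.log (πdpo j) + (1 - β₀ / β) * Real.log (πref j))) :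
    ∀ π : V → ℝ, (∀ i, 0 < π i) → (∑ i, π i = 1) →
      (∑ i, π i * (β₀ * Real.log (πdpo i / πref i) - β * Real.log (π i / πref i)) ≤
        ∑ i, πstar i * (β₀ * Real.log (πdpo i / πref i) - β * Real.log (πstar i / πref i)))
      ∧ ((∑ i, π i * (β₀ * Real.log (πdpo i / πref i) - β * Real.log (π i / πref i)) =
        ∑ i, πstar i * (β₀ * Real.log (πdpo i / πref i) - β * Real.log (πstar i / πref i)))
        ↔ π = πstar) := by
  intro π hπ hπs
  set Z := ∑ j, Real.exp ((β₀ / β) * Real.log (πdpo j) + (1 - β₀ / β) * Real.log (πref j))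
    with hZ
  have hZpos : 0 < Z :=
    Finset.sum_pos (fun j _ => Real.exp_pos _) Finset.univ_nonempty
  have hstarpos : ∀ i, 0 < πstar i := fun i => by
    rw [hstar]; exact div_pos (Real.exp_pos _) hZpos
  have hstarsum : ∑ i, πstar i = 1 := by
    simp only [hstar]
    rw [← Finset.sum_div, ← hZ, div_self (ne_of_gt hZpos)]
  have hlogstar : ∀ i, Real.log (πstar i) =
      (β₀ / β) * Real.log (πdpo i) + (1 - β₀ / β) * Real.log (πref i) - Real.log Z := by
    intro i
    rw [hstar, Real.log_div (Real.exp_ne_zero _) (ne_of_gt hZpos), Real.log_exp]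
  have key : ∀ (p : V → ℝ), (∀ i, 0 < p i) → (∑ i, p i = 1) →
      ∑ i, p i * (β₀ * Real.log (πdpo i / πref i) - β * Real.log (p i / πref i))
        = β * ∑ i, p i * Real.log (πstar i / p i) + β * Real.log Z := by
    intro p hp hps
    rw [Finset.mul_sum]
    have : β * Real.log Z = ∑ i, p i * (β * Real.log Z) := by
      rw [← Finset.sum_mul, hps, one_mul]
    rw [this, ← Finset.sum_add_distrib]
    apply Finset.sum_congr rfl
    intro i _
    rw [Real.log_div (ne_of_gt (hstarpos i)) (ne_of_gt (hp i)),
        Real.log_div (ne_of_gt (hdpo i)) (ne_of_gt (href i)),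
        Real.log_div (ne_of_gt (hp i)) (ne_of_gt (href i)),
        hlogstar i]
    field_simp
    ring
  have gibbs : ∀ (p : V → ℝ), (∀ i, 0 < p i) → (∑ i, p i = 1) →
      (∑ i, p i * Real.log (πstar i / p i) ≤ 0) ∧
      ((∑ i, p i * Real.log (πstar i / p i) = 0) ↔ p = πstar) := by
    intro p hp hps
    have hterm : ∀ i ∈ Finset.univ, p i * Real.log (πstar i / p i) ≤ πstar i - p i := by
      intro i _
      have h1 : Real.log (πstar i / p i) ≤ πstar i / p i - 1 :=
        Real.log_le_sub_one_of_pos (div_pos (hstarpos i) (hp i))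
      calc p i * Real.log (πstar i / p i) ≤ p i * (πstar i / p i - 1) :=
            mul_le_mul_of_nonneg_left h1 (le_of_lt (hp i))
        _ = πstar i - p i := by rw [mul_sub, mul_one, mul_div_cancel₀ _ (ne_of_gt (hp i))]
    have hsum0 : ∑ i, (πstar i - p i) = 0 := by
      rw [Finset.sum_sub_distrib, hstarsum, hps]; ring
    have hle : ∑ i, p i * Real.log (πstar i / p i) ≤ 0 := by
      calc ∑ i, p i * Real.log (πstar i / p i) ≤ ∑ i, (πstar i - p i) :=
            Finset.sum_le_sum hterm
        _ = 0 := hsum0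
    refine ⟨hle, ?_, ?_⟩
    · intro heq
      by_contra hne
      obtain ⟨i, hi⟩ := Function.ne_iff.mp hne
      have hx : πstar i / p i ≠ 1 := fun h =>
        hi ((div_eq_one_iff_eq (ne_of_gt (hp i))).mp h).symm
      have h1 : Real.log (πstar i / p i) < πstar i / p i - 1 :=
        Real.log_lt_sub_one_of_pos (div_pos (hstarpos i) (hp i)) hx
      have hstrict : p i * Real.log (πstar i / p i) < πstar i - p i := by
        calc p i * Real.log (πstar i / p i) < p i * (πstar i / p i - 1) :=
              (mul_lt_mul_iff_right₀ (hp i)).mpr h1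
          _ = πstar i - p i := by rw [mul_sub, mul_one, mul_div_cancel₀ _ (ne_of_gt (hp i))]
      have hlt : ∑ i, p i * Real.log (πstar i / p i) < 0 := by
        calc ∑ i, p i * Real.log (πstar i / p i) < ∑ i, (πstar i - p i) :=
              Finset.sum_lt_sum hterm ⟨i, Finset.mem_univ i, hstrict⟩
          _ = 0 := hsum0
      rw [heq] at hlt
      exact lt_irrefl 0 hlt
    · intro h
      subst h
      exact Finset.sum_eq_zero fun i _ => by
        rw [div_self (ne_of_gt (hstarpos i)), Real.log_one, mul_zero]
  have hJ := key π hπ hπs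
  have hJs := key πstar hstarpos hstarsum
  have hSstar : ∑ i, πstar i * Real.log (πstar i / πstar i) = 0 :=
    Finset.sum_eq_zero fun i _ => by
      rw [div_self (ne_of_gt (hstarpos i)), Real.log_one, mul_zero]
  obtain ⟨hle, hiff⟩ := gibbs π hπ hπs
  rw [hJ, hJs, hSstar, mul_zero, zero_add]
  constructor
  · nlinarith
  · constructor
    · intro h
      apply hiff.mp
      have hz : β * ∑ i, π i * Real.log (πstar i / π i) = 0 := by linarith
      exact (mul_eq_zero.mp hz).resolve_left (ne_of_gt hβ)
    · intro h
      rw [hiff.mpr h]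
      ring
end
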